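/- arXiv:2302.09658 — 2 statements merged into one kernel-verified Lean document; each statement's English description precedes it below -/
import Mathlib

section
/- Let p, q, k be positive integers and d = gcd(p,q). If q > p or p > kq, then Γ(p,q) = p² + kq² - kpq > d². -/
/-!
Write `Γ = p² + kq² - kpq`. Since `d` divides both `p` and `q`, it suffices to beat `p²` or `q²`:
if `q > p` then `Γ = p² + kq(q - p) > p²`, and if `p > kq` then `Γ = q² + p(p - kq) + (k - 1)q² > q²`.
-/

lemma sq_lt_gamma_of_lt (p : ℤ) {q k : ℤ} (hq : 0 < q) (hk : 0 < k) (h : p < q) :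
    p ^ 2 < p ^ 2 + k * q ^ 2 - k * p * q := by
  nlinarith [mul_pos (mul_pos hk hq) (sub_pos.mpr h)]

lemma sq_lt_gamma_of_mul_lt {p q k : ℤ} (hp : 0 < p) (hk : 0 < k) (h : k * q < p) :
    q ^ 2 < p ^ 2 + k * q ^ 2 - k * p * q := by
  nlinarith [mul_pos hp (sub_pos.mpr h), mul_nonneg (sub_nonneg.mpr hk) (sq_nonneg q)]

/-- Let `p, q, k` be positive integers and `d = gcd(p,q)`.
If `q > p` or `p > kq`, then `Γ(p,q) = p² + kq² - kpq > d²`. -/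
theorem stmt_3 (p q k : ℤ) (hp : 0 < p) (hq : 0 < q) (hk : 0 < k)
    (h : q > p ∨ p > k * q) :
    p ^ 2 + k * q ^ 2 - k * p * q > (Int.gcd p q : ℤ) ^ 2 := by
  have hd : (0 : ℤ) ≤ Int.gcd p q := Int.natCast_nonneg _
  rcases h with h | h
  · calc (Int.gcd p q : ℤ) ^ 2 ≤ p ^ 2 := pow_le_pow_left₀ hd (Int.gcd_le_left q hp) 2
      _ < _ := sq_lt_gamma_of_lt p hq hk h
  · calc (Int.gcd p q : ℤ) ^ 2 ≤ q ^ 2 := pow_le_pow_left₀ hd (Int.gcd_le_right p hq) 2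
      _ < _ := sq_lt_gamma_of_mul_lt hp hk h
end

section
/- Define an equivalence relation ∼_k on pairs of positive integers generated by: (p,q) ∼_k (kq - p, q) whenever p < kq, and (p,q) ∼_k (p, p - q) whenever q < p. Then Γ(p,q) = p² + kq² - kpq is constant on ∼_k equivalence classes. -/
/-- The generating moves of the equivalence relation `∼_k` on pairs of
positive integers: `(p,q) ↦ (kq - p, q)` when `p < kq`, and
`(p,q) ↦ (p, p - q)` when `q < p`. -/
inductive StarMove (k : ℤ) : ℤ × ℤ → ℤ × ℤ → Prop
  | reflect_center (p q : ℤ) (hp : 0 < p) (hq : 0 < q) (h : p < k * q) :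
      StarMove k (p, q) (k * q - p, q)
  | reflect_leaves (p q : ℤ) (hp : 0 < p) (hq : 0 < q) (h : q < p) :
      StarMove k (p, q) (p, p - q)

/-- `Γ(p,q) = p² + kq² - kpq`. -/
def starGamma (k : ℤ) (a : ℤ × ℤ) : ℤ :=
  a.1 ^ 2 + k * a.2 ^ 2 - k * a.1 * a.2

/-- `Γ` is constant on equivalence classes of the equivalence relation `∼_k`
generated by the moves `(p,q) ∼ (kq-p, q)` for `p < kq` and
`(p,q) ∼ (p, p-q)` for `q < p`. -/
theorem stmt_18 (k : ℤ) (hk : 0 < k) (a b : ℤ × ℤ)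
    (h : Relation.EqvGen (StarMove k) a b) :
    starGamma k a = starGamma k b := by
  induction h with
  | rel x y hxy => cases hxy <;> simp [starGamma] <;> ring
  | refl => rfl
  | symm _ _ _ ih => exact ih.symm
  | trans _ _ _ _ _ ih1 ih2 => exact ih1.trans ih2
end
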